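/- Let X, Y, Z, Z̃ be finite-dimensional real Hilbert spaces, A : X → Y, 𝔏 : X → Z, B : Z → Z̃ bounded linear, μ > 0, y ∈ Y, and Ψ ∈ Γ₀(Z) coercive with dom Ψ = Z. Define the GME Ψ_B and J(x) := (1/2)‖y − Ax‖² + μ·(Ψ_B ∘ 𝔏)(x). If A*A − μ 𝔏* B* B 𝔏 ⪰ 0, then J is convex. -/
import Mathlib


open Filter

/-- The generalized Moreau enhancement of `Ψ` with matrix `B`. -/
noncomputable def GME {Z Z' : Type*} [NormedAddCommGroup Z] [InnerProductSpace ℝ Z]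
    [NormedAddCommGroup Z'] [InnerProductSpace ℝ Z']
    (Ψ : Z → ℝ) (B : Z →L[ℝ] Z') (u : Z) : ℝ :=
  Ψ u - ⨅ v : Z, (Ψ v + ‖B (u - v)‖ ^ 2 / 2)

open RealInnerProductSpace in
/-- Auxiliary: a nonnegative quadratic-type difference plus an affine part is convex. -/
private theorem quad_convex_aux
    {X Y Z Z' : Type*}
    [NormedAddCommGroup X] [InnerProductSpace ℝ X]
    [NormedAddCommGroup Y] [InnerProductSpace ℝ Y]
    [NormedAddCommGroup Z] [InnerProductSpace ℝ Z]
    [NormedAddCommGroup Z'] [InnerProductSpace ℝ Z']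
    (A : X →L[ℝ] Y) (𝔏 : X →L[ℝ] Z) (B : Z →L[ℝ] Z') (μ : ℝ) (y : Y)
    (hocc : ∀ x : X, μ * ‖B (𝔏 x)‖ ^ 2 ≤ ‖A x‖ ^ 2) :
    ConvexOn ℝ Set.univ
      (fun x : X => ‖y‖ ^ 2 / 2 - ⟪y, A x⟫ + (‖A x‖ ^ 2 - μ * ‖B (𝔏 x)‖ ^ 2) / 2) := by
  refine ⟨convex_univ, fun p _ q _ a b ha hb hab => ?_⟩
  have hb1 : b = 1 - a := by linarith
  subst hb1
  have eA : ‖A (a • p + (1 - a) • q)‖ ^ 2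
      = a ^ 2 * ‖A p‖ ^ 2 + 2 * (a * (1 - a)) * ⟪A p, A q⟫ + (1 - a) ^ 2 * ‖A q‖ ^ 2 := by
    rw [map_add, map_smul, map_smul, norm_add_sq_real, norm_smul, norm_smul,
      real_inner_smul_left, real_inner_smul_right]
    simp only [Real.norm_eq_abs, mul_pow, sq_abs]
    ring
  have eB : ‖B (𝔏 (a • p + (1 - a) • q))‖ ^ 2
      = a ^ 2 * ‖B (𝔏 p)‖ ^ 2 + 2 * (a * (1 - a)) * ⟪B (𝔏 p), B (𝔏 q)⟫
        + (1 - a) ^ 2 * ‖B (𝔏 q)‖ ^ 2 := by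
    rw [map_add, map_smul, map_smul, map_add, map_smul, map_smul, norm_add_sq_real,
      norm_smul, norm_smul, real_inner_smul_left, real_inner_smul_right]
    simp only [Real.norm_eq_abs, mul_pow, sq_abs]
    ring
  have ey : ⟪y, A (a • p + (1 - a) • q)⟫ = a * ⟪y, A p⟫ + (1 - a) * ⟪y, A q⟫ := by
    rw [map_add, map_smul, map_smul, inner_add_right, real_inner_smul_right,
      real_inner_smul_right]
  have hpq := hocc (p - q)
  have eA' : ‖A (p - q)‖ ^ 2 = ‖A p‖ ^ 2 - 2 * ⟪A p, A q⟫ + ‖A q‖ ^ 2 := by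
    rw [map_sub, norm_sub_sq_real]
  have eB' : ‖B (𝔏 (p - q))‖ ^ 2
      = ‖B (𝔏 p)‖ ^ 2 - 2 * ⟪B (𝔏 p), B (𝔏 q)⟫ + ‖B (𝔏 q)‖ ^ 2 := by
    rw [map_sub, map_sub, norm_sub_sq_real]
  rw [eA', eB'] at hpq
  simp only [smul_eq_mul]
  rw [eA, eB, ey]
  nlinarith [mul_nonneg ha hb, hpq]

/-- Overall convexity condition: if `A*A − μ 𝔏* B* B 𝔏 ⪰ 0` (equivalently
`μ‖B(𝔏x)‖² ≤ ‖Ax‖²` for all `x`), then the LiGME cost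
`J(x) = ½‖y − Ax‖² + μ (Ψ_B ∘ 𝔏)(x)` is convex. -/
theorem ligme_overall_convexity
    {X Y Z Z' : Type*}
    [NormedAddCommGroup X] [InnerProductSpace ℝ X] [FiniteDimensional ℝ X]
    [NormedAddCommGroup Y] [InnerProductSpace ℝ Y] [FiniteDimensional ℝ Y]
    [NormedAddCommGroup Z] [InnerProductSpace ℝ Z] [FiniteDimensional ℝ Z]
    [NormedAddCommGroup Z'] [InnerProductSpace ℝ Z'] [FiniteDimensional ℝ Z']
    (A : X →L[ℝ] Y) (𝔏 : X →L[ℝ] Z) (B : Z →L[ℝ] Z') (μ : ℝ) (hμ : 0 < μ) (y : Y)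
    (Ψ : Z → ℝ) (hconv : ConvexOn ℝ Set.univ Ψ) (hlsc : LowerSemicontinuous Ψ)
    (hcoercive : Tendsto Ψ (cocompact Z) atTop)
    (hocc : ∀ x : X, μ * ‖B (𝔏 x)‖ ^ 2 ≤ ‖A x‖ ^ 2) :
    ConvexOn ℝ Set.univ (fun x : X => ‖y - A x‖ ^ 2 / 2 + μ * GME Ψ B (𝔏 x)) := by
  open RealInnerProductSpace in
  have hZ : Nonempty Z := ⟨0⟩
  -- Ψ is bounded below.
  obtain ⟨m, hm⟩ : ∃ m : ℝ, ∀ v, m ≤ Ψ v := by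
    have hcont : Continuous Ψ := continuousOn_univ.mp (hconv.continuousOn isOpen_univ)
    obtain ⟨v₀, hv₀⟩ := hcont.exists_forall_le hcoercive
    exact ⟨Ψ v₀, hv₀⟩
  -- The conjugate-type supremum.
  set S : Z → ℝ := fun u => ⨆ v : Z, (⟪B u, B v⟫ - Ψ v - ‖B v‖ ^ 2 / 2) with hSdef
  have hbddS : ∀ u : Z,
      BddAbove (Set.range fun v : Z => ⟪B u, B v⟫ - Ψ v - ‖B v‖ ^ 2 / 2) := by
    intro u
    refine ⟨‖B u‖ ^ 2 / 2 - m, ?_⟩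
    rintro _ ⟨v, rfl⟩
    have h1 : ⟪B u, B v⟫ ≤ ‖B u‖ * ‖B v‖ := real_inner_le_norm _ _
    have h2 := hm v
    nlinarith [sq_nonneg (‖B u‖ - ‖B v‖)]
  -- Rewrite of GME.
  have hGME : ∀ u : Z, GME Ψ B u = Ψ u - ‖B u‖ ^ 2 / 2 + S u := by
    intro u
    have hfun : ∀ v : Z, Ψ v + ‖B (u - v)‖ ^ 2 / 2
        = ‖B u‖ ^ 2 / 2 - (⟪B u, B v⟫ - Ψ v - ‖B v‖ ^ 2 / 2) := by
      intro v
      have h : ‖B (u - v)‖ ^ 2 = ‖B u‖ ^ 2 - 2 * ⟪B u, B v⟫ + ‖B v‖ ^ 2 := by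
        rw [map_sub, norm_sub_sq_real]
      linarith
    have hbddI : BddBelow (Set.range fun v : Z => Ψ v + ‖B (u - v)‖ ^ 2 / 2) := by
      refine ⟨m, ?_⟩
      rintro _ ⟨v, rfl⟩
      have h2 : (0:ℝ) ≤ ‖B (u - v)‖ ^ 2 / 2 := by positivity
      have := hm v
      linarith
    have hInf : (⨅ v : Z, (Ψ v + ‖B (u - v)‖ ^ 2 / 2)) = ‖B u‖ ^ 2 / 2 - S u := by
      apply le_antisymm
      · rw [le_sub_comm]
        apply ciSup_le
        intro v
        have h := ciInf_le hbddI v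
        rw [hfun v] at h
        linarith
      · apply le_ciInf
        intro v
        rw [hfun v]
        have h := le_ciSup (hbddS u) v
        have hs : (⟪B u, B v⟫ - Ψ v - ‖B v‖ ^ 2 / 2) ≤ S u := h
        linarith
    rw [GME, hInf]
    ring
  -- Decompose J.
  have hJ : (fun x : X => ‖y - A x‖ ^ 2 / 2 + μ * GME Ψ B (𝔏 x))
      = fun x : X => (‖y‖ ^ 2 / 2 - ⟪y, A x⟫ + (‖A x‖ ^ 2 - μ * ‖B (𝔏 x)‖ ^ 2) / 2)
        + μ * Ψ (𝔏 x) + μ * S (𝔏 x) := by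
    funext x
    have h1 : ‖y - A x‖ ^ 2 = ‖y‖ ^ 2 - 2 * ⟪y, A x⟫ + ‖A x‖ ^ 2 := norm_sub_sq_real _ _
    rw [hGME (𝔏 x), h1]
    ring
  rw [hJ]
  -- Convexity of each piece.
  have hquad := quad_convex_aux A 𝔏 B μ y hocc
  have hpsi : ConvexOn ℝ Set.univ fun x : X => μ * Ψ (𝔏 x) := by
    have h𝔏 : ConvexOn ℝ Set.univ fun x : X => Ψ (𝔏 x) :=
      ⟨convex_univ, fun p _ q _ a b ha hb hab => by
        simpa [map_add, map_smul] using
          hconv.2 (Set.mem_univ (𝔏 p)) (Set.mem_univ (𝔏 q)) ha hb hab⟩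
    simpa [smul_eq_mul] using h𝔏.smul hμ.le
  have hSconv : ConvexOn ℝ Set.univ fun x : X => μ * S (𝔏 x) := by
    have hS0 : ConvexOn ℝ Set.univ fun x : X => S (𝔏 x) := by
      refine ⟨convex_univ, fun p _ q _ a b ha hb hab => ?_⟩
      have hb1 : b = 1 - a := by linarith
      subst hb1
      simp only [smul_eq_mul, hSdef]
      apply ciSup_le
      intro v
      have e : ⟪B (𝔏 (a • p + (1 - a) • q)), B v⟫
          = a * ⟪B (𝔏 p), B v⟫ + (1 - a) * ⟪B (𝔏 q), B v⟫ := by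
        rw [map_add, map_smul, map_smul, map_add, map_smul, map_smul, inner_add_left,
          real_inner_smul_left, real_inner_smul_left]
      have h1 : (⟪B (𝔏 p), B v⟫ - Ψ v - ‖B v‖ ^ 2 / 2)
          ≤ ⨆ w : Z, (⟪B (𝔏 p), B w⟫ - Ψ w - ‖B w‖ ^ 2 / 2) := le_ciSup (hbddS (𝔏 p)) v
      have h2 : (⟪B (𝔏 q), B v⟫ - Ψ v - ‖B v‖ ^ 2 / 2)
          ≤ ⨆ w : Z, (⟪B (𝔏 q), B w⟫ - Ψ w - ‖B w‖ ^ 2 / 2) := le_ciSup (hbddS (𝔏 q)) v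
      have h1' := mul_le_mul_of_nonneg_left h1 ha
      have h2' := mul_le_mul_of_nonneg_left h2 hb
      rw [e]
      nlinarith [h1', h2']
    simpa [smul_eq_mul] using hS0.smul hμ.le
  exact (hquad.add hpsi).add hSconv
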